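/- arXiv:1106.5468 — 3 statements merged into one kernel-verified Lean document; each statement's English description precedes it below -/
import Mathlib

section
/- Let ħ > 0 and let S, S′ ∈ Sp(2n,ℝ). The images of the closed ball of radius √ħ centered at the origin in ℝ²ⁿ under S and under S′ coincide if and only if S′ = SU for some matrix U that is both symplectic and orthogonal (i.e. U ∈ Sp(2n,ℝ) ∩ O(2n,ℝ)). -/
open Matrix

noncomputable section

/-- The standard symplectic matrix `J = ((0, I), (-I, 0))`. -/
def stdJ (n : ℕ) : Matrix (Fin n ⊕ Fin n) (Fin n ⊕ Fin n) ℝ :=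
  Matrix.fromBlocks 0 1 (-1) 0

/-- A real `2n × 2n` matrix is symplectic if `Sᵀ J S = J`. -/
def IsSymplectic {n : ℕ} (S : Matrix (Fin n ⊕ Fin n) (Fin n ⊕ Fin n) ℝ) : Prop :=
  Sᵀ * stdJ n * S = stdJ n

/-! A symplectic rotation `U` maps the ball `B` onto itself, so `(S U) B = S B`. Conversely,
if `S B = S' B`, then `U = S⁻¹ S'` is symplectic and `U B = B`; as `B` has positive radius,
homogeneity shows that neither `U` nor `U⁻¹` lengthens any vector, so `U` is an isometry,
hence orthogonal. -/

theorem stdJ_eq_neg_J (n : ℕ) : stdJ n = -J (Fin n) ℝ := by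
  simp [stdJ, J, fromBlocks_neg]

theorem isSymplectic_iff_mem_symplecticGroup {n : ℕ}
    {S : Matrix (Fin n ⊕ Fin n) (Fin n ⊕ Fin n) ℝ} :
    IsSymplectic S ↔ S ∈ symplecticGroup (Fin n) ℝ := by
  rw [IsSymplectic, stdJ_eq_neg_J, SymplecticGroup.mem_iff', Matrix.mul_neg, Matrix.neg_mul,
    neg_inj]

section DotBall

variable {ι : Type*} [Fintype ι]

/-- The closed ball of radius `√r`. -/
def dotBall (ι : Type*) [Fintype ι] (r : ℝ) : Set (ι → ℝ) :=
  {z | z ⬝ᵥ z ≤ r}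

@[simp]
theorem mem_dotBall {r : ℝ} {z : ι → ℝ} : z ∈ dotBall ι r ↔ z ⬝ᵥ z ≤ r := Iff.rfl

theorem dotProduct_mulVec_self_le_of_mapsTo {r : ℝ} (hr : 0 < r) {U : Matrix ι ι ℝ}
    (hU : Set.MapsTo (U *ᵥ ·) (dotBall ι r) (dotBall ι r)) (z : ι → ℝ) :
    U *ᵥ z ⬝ᵥ U *ᵥ z ≤ z ⬝ᵥ z := by
  have hz0 : 0 ≤ z ⬝ᵥ z := Finset.sum_nonneg fun i _ => mul_self_nonneg (z i)
  obtain hz | hz := hz0.eq_or_lt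
  · simp [dotProduct_self_eq_zero.1 hz.symm]
  set c := √(r / (z ⬝ᵥ z))
  have hc : c * c * (z ⬝ᵥ z) = r := by
    rw [Real.mul_self_sqrt (by positivity), div_mul_cancel₀ _ hz.ne']
  have hcc : 0 < c * c := by positivity
  have hcz : c • z ∈ dotBall ι r := by
    simp only [mem_dotBall, smul_dotProduct, dotProduct_smul, smul_eq_mul, ← hc, mul_assoc,
      le_refl]
  have hUcz := hU hcz
  simp only [mem_dotBall, mulVec_smul, smul_dotProduct, dotProduct_smul, smul_eq_mul, ← hc,
    ← mul_assoc] at hUcz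
  exact le_of_mul_le_mul_left hUcz hcc

theorem dotProduct_mulVec_self_eq_iff [DecidableEq ι] {U : Matrix ι ι ℝ} :
    (∀ z, U *ᵥ z ⬝ᵥ U *ᵥ z = z ⬝ᵥ z) ↔ Uᵀ * U = 1 := by
  refine ⟨fun hU => ?_, fun hU z => ?_⟩
  · have polar (x y : ι → ℝ) : U *ᵥ x ⬝ᵥ U *ᵥ y = x ⬝ᵥ y := by
      have := hU (x + y)
      simp only [mulVec_add, add_dotProduct, dotProduct_add, hU, dotProduct_comm y x,
        dotProduct_comm (U *ᵥ y)] at this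
      linarith
    refine ext_iff_mulVec.2 fun y => dotProduct_eq _ _ fun x => ?_
    rw [← mulVec_mulVec, mulVec_transpose, ← dotProduct_mulVec, polar, one_mulVec]
  · rw [dotProduct_mulVec, ← mulVec_transpose, mulVec_mulVec, hU, one_mulVec]

theorem image_mulVec_dotBall_of_transpose_mul_self [DecidableEq ι] {r : ℝ} {U : Matrix ι ι ℝ}
    (hU : Uᵀ * U = 1) : (U *ᵥ ·) '' dotBall ι r = dotBall ι r := by
  have hUt : Uᵀᵀ * Uᵀ = 1 := by rw [transpose_transpose, mul_eq_one_comm.mp hU]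
  refine Set.Subset.antisymm ?_ fun z hz => ⟨Uᵀ *ᵥ z, ?_, ?_⟩
  · rintro _ ⟨z, hz, rfl⟩
    rwa [mem_dotBall, dotProduct_mulVec_self_eq_iff.2 hU]
  · rwa [mem_dotBall, dotProduct_mulVec_self_eq_iff.2 hUt]
  · simp only [mulVec_mulVec, mul_eq_one_comm.mp hU, one_mulVec]

theorem transpose_mul_self_eq_one_of_image_mulVec_dotBall [DecidableEq ι] {r : ℝ} (hr : 0 < r)
    {U : Matrix ι ι ℝ} (hU : IsUnit U) (hB : (U *ᵥ ·) '' dotBall ι r = dotBall ι r) :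
    Uᵀ * U = 1 := by
  obtain ⟨V, hVU⟩ := hU.exists_left_inv
  have hV : (V *ᵥ ·) '' dotBall ι r = dotBall ι r := by
    conv_lhs => rw [← hB, Set.image_image]
    simp [mulVec_mulVec, hVU]
  refine dotProduct_mulVec_self_eq_iff.1 fun z =>
    (dotProduct_mulVec_self_le_of_mapsTo hr (Set.mapsTo_iff_image_subset.2 hB.le) z).antisymm ?_
  simpa [mulVec_mulVec, hVU] using
    dotProduct_mulVec_self_le_of_mapsTo hr (Set.mapsTo_iff_image_subset.2 hV.le) (U *ᵥ z)

end DotBall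

theorem image_ball_eq_iff_symplectic_rotation_general {n : ℕ} (hb : ℝ) (hhb : 0 < hb)
    (S S' : Matrix (Fin n ⊕ Fin n) (Fin n ⊕ Fin n) ℝ)
    (hS : IsSymplectic S) (hS' : IsSymplectic S') :
    ((fun z => S.mulVec z) ''
        {z : (Fin n ⊕ Fin n) → ℝ | Real.sqrt (z ⬝ᵥ z) ≤ Real.sqrt hb} =
      (fun z => S'.mulVec z) ''
        {z : (Fin n ⊕ Fin n) → ℝ | Real.sqrt (z ⬝ᵥ z) ≤ Real.sqrt hb}) ↔
      ∃ U : Matrix (Fin n ⊕ Fin n) (Fin n ⊕ Fin n) ℝ,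
        IsSymplectic U ∧ Uᵀ * U = 1 ∧ S' = S * U := by
  rw [isSymplectic_iff_mem_symplecticGroup] at hS hS'
  set g : symplecticGroup (Fin n) ℝ := ⟨S, hS⟩
  set g' : symplecticGroup (Fin n) ℝ := ⟨S', hS'⟩
  set u := g⁻¹ * g'
  set U : Matrix (Fin n ⊕ Fin n) (Fin n ⊕ Fin n) ℝ := ↑u
  have hSU : S' = S * U := congrArg Subtype.val (mul_inv_cancel_left g g').symm
  have hS_unit : IsUnit S := (Group.isUnit g).map (symplecticGroup (Fin n) ℝ).subtype
  have hU_unit : IsUnit U := (Group.isUnit u).map (symplecticGroup (Fin n) ℝ).subtype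
  have hball : {z : (Fin n ⊕ Fin n) → ℝ | √(z ⬝ᵥ z) ≤ √hb} = dotBall _ hb := by
    ext z
    exact Real.sqrt_le_sqrt_iff hhb.le
  calc _ ↔ (S *ᵥ ·) '' dotBall _ hb = (S *ᵥ ·) '' ((U *ᵥ ·) '' dotBall _ hb) := by
        rw [hball, Set.image_image, hSU]
        simp only [mulVec_mulVec]
    _ ↔ Uᵀ * U = 1 := by
        rw [(mulVec_injective_iff_isUnit.2 hS_unit).image_injective.eq_iff, eq_comm]
        exact ⟨transpose_mul_self_eq_one_of_image_mulVec_dotBall hhb hU_unit,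
          image_mulVec_dotBall_of_transpose_mul_self⟩
    _ ↔ _ := by
        refine ⟨fun hU => ⟨U, isSymplectic_iff_mem_symplecticGroup.2 u.2, hU, hSU⟩, ?_⟩
        rintro ⟨V, -, hV, hSV⟩
        rwa [hS_unit.mul_left_cancel (hSU.symm.trans hSV)]

/-- Two symplectic matrices give the same image of the closed ball of radius `√ħ`
centered at the origin if and only if they differ by a symplectic rotation
`U ∈ Sp(2n,ℝ) ∩ O(2n,ℝ)`. -/
theorem image_ball_eq_iff_symplectic_rotation {n : ℕ} (hn : 1 ≤ n) (hb : ℝ) (hhb : 0 < hb)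
    (S S' : Matrix (Fin n ⊕ Fin n) (Fin n ⊕ Fin n) ℝ)
    (hS : IsSymplectic S) (hS' : IsSymplectic S') :
    ((fun z => S.mulVec z) ''
        {z : (Fin n ⊕ Fin n) → ℝ | Real.sqrt (z ⬝ᵥ z) ≤ Real.sqrt hb} =
      (fun z => S'.mulVec z) ''
        {z : (Fin n ⊕ Fin n) → ℝ | Real.sqrt (z ⬝ᵥ z) ≤ Real.sqrt hb}) ↔
      ∃ U : Matrix (Fin n ⊕ Fin n) (Fin n ⊕ Fin n) ℝ,
        IsSymplectic U ∧ Uᵀ * U = 1 ∧ S' = S * U :=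
  image_ball_eq_iff_symplectic_rotation_general hb hhb S S' hS hS'
end
end

section
/- Let S ∈ Sp(2n,ℝ) have block form S = ((A,B),(C,D)) with real n×n blocks, and let M = X + iY where X and Y are real symmetric n×n matrices with X positive definite. Then the complex n×n matrix CM + iD = C(X + iY) + iD is invertible. -/
/-!
If `(C M + i D) v = 0` with `v ≠ 0`, put `ξ = (M v, i v)`. The lower block of `S ξ` is
`(C M + i D) v = 0`, so the Hermitian form `ξ ↦ ξᴴ J ξ`, which `S` preserves, vanishes at `S ξ`
and hence at `ξ`. But `ξᴴ J ξ = i vᴴ (Mᴴ + M) v = 2 i vᴴ X v`, and the real part of `vᴴ X v` is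
`(Re v)ᵀ X (Re v) + (Im v)ᵀ X (Im v) > 0`.
-/

open Matrix

noncomputable section

namespace Matrix

variable {ι : Type*}

lemma conjTranspose_map_ofReal {κ : Type*} (S : Matrix ι κ ℝ) :
    (S.map Complex.ofReal)ᴴ = Sᵀ.map Complex.ofReal := by
  rw [← conjTranspose_map _ fun _ => (Complex.conj_ofReal _).symm,
    conjTranspose_eq_transpose_of_trivial]

lemma IsSymm.isHermitian_map_ofReal {X : Matrix ι ι ℝ} (hX : X.IsSymm) :
    (X.map Complex.ofReal).IsHermitian := by
  rw [IsHermitian, conjTranspose_map_ofReal, hX.eq]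

lemma IsHermitian.conjTranspose_add_self_add_I_smul {P Q : Matrix ι ι ℂ} (hP : P.IsHermitian)
    (hQ : Q.IsHermitian) : (P + Complex.I • Q)ᴴ + (P + Complex.I • Q) = (2 : ℂ) • P := by
  rw [conjTranspose_add, conjTranspose_smul, hP.eq, hQ.eq, Complex.star_def, Complex.conj_I]
  module

variable [Fintype ι]

lemma star_mulVec_dotProduct_mulVec_of_conjTranspose_mul_mul {R : Type*} [CommSemiring R]
    [StarRing R] {S G : Matrix ι ι R} (h : Sᴴ * G * S = G) (ξ : ι → R) :
    star (S *ᵥ ξ) ⬝ᵥ G *ᵥ (S *ᵥ ξ) = star ξ ⬝ᵥ G *ᵥ ξ := by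
  rw [star_mulVec, ← dotProduct_mulVec, mulVec_mulVec, mulVec_mulVec, h]

lemma star_mulVec_dotProduct_I_smul_sub (M : Matrix ι ι ℂ) (v : ι → ℂ) :
    star (M *ᵥ v) ⬝ᵥ (Complex.I • v) - star (Complex.I • v) ⬝ᵥ (M *ᵥ v) =
      Complex.I * (star v ⬝ᵥ (Mᴴ + M) *ᵥ v) := by
  rw [star_mulVec, ← dotProduct_mulVec, add_mulVec, dotProduct_add, star_smul, mulVec_smul]
  simp only [dotProduct_smul, smul_dotProduct, Complex.star_def, Complex.conj_I, smul_eq_mul]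
  ring

lemma re_star_dotProduct_map_ofReal_mulVec (X : Matrix ι ι ℝ) (v : ι → ℂ) :
    (star v ⬝ᵥ X.map Complex.ofReal *ᵥ v).re =
      (fun i => (v i).re) ⬝ᵥ X *ᵥ (fun i => (v i).re) +
        (fun i => (v i).im) ⬝ᵥ X *ᵥ (fun i => (v i).im) := by
  simp only [dotProduct, mulVec, Complex.re_sum, Finset.mul_sum, ← Finset.sum_add_distrib,
    Pi.star_apply, map_apply, Complex.mul_re, Complex.star_def, Complex.conj_re, Complex.conj_im,
    Complex.ofReal_re, Complex.ofReal_im, Complex.mul_im]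
  refine Finset.sum_congr rfl fun i _ => Finset.sum_congr rfl fun j _ => ?_
  ring

lemma PosDef.re_star_dotProduct_map_ofReal_mulVec_pos {X : Matrix ι ι ℝ} (hX : X.PosDef)
    {v : ι → ℂ} (hv : v ≠ 0) : 0 < (star v ⬝ᵥ X.map Complex.ofReal *ᵥ v).re := by
  rw [re_star_dotProduct_map_ofReal_mulVec]
  have hnonneg (x : ι → ℝ) : 0 ≤ x ⬝ᵥ X *ᵥ x := by
    simpa using hX.posSemidef.dotProduct_mulVec_nonneg x
  have hpos {x : ι → ℝ} (hx : x ≠ 0) : 0 < x ⬝ᵥ X *ᵥ x := by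
    simpa using hX.dotProduct_mulVec_pos hx
  by_cases hre : (fun i => (v i).re) = 0
  · have him : (fun i => (v i).im) ≠ 0 := fun him =>
      hv (funext fun i => Complex.ext (congrFun hre i) (congrFun him i))
    exact add_pos_of_nonneg_of_pos (hnonneg _) (hpos him)
  · exact add_pos_of_pos_of_nonneg (hpos hre) (hnonneg _)

end Matrix

lemma star_sumElim_dotProduct_stdJ_mulVec_sumElim {n : ℕ} (x y : Fin n → ℂ) :
    star (Sum.elim x y) ⬝ᵥ (stdJ n).map Complex.ofReal *ᵥ Sum.elim x y =
      star x ⬝ᵥ y - star y ⬝ᵥ x := by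
  have hJ : (stdJ n).map Complex.ofReal = fromBlocks 0 1 (-1) 0 := by
    rw [stdJ, fromBlocks_map]
    simp [Matrix.map_neg]
  rw [hJ, fromBlocks_mulVec]
  simp [Function.star_sumElim, sumElim_dotProduct_sumElim, neg_mulVec, sub_eq_add_neg]

lemma IsSymplectic.conjTranspose_map_ofReal_mul_mul {n : ℕ}
    {S : Matrix (Fin n ⊕ Fin n) (Fin n ⊕ Fin n) ℝ} (hS : IsSymplectic S) :
    (S.map Complex.ofReal)ᴴ * (stdJ n).map Complex.ofReal * S.map Complex.ofReal =
      (stdJ n).map Complex.ofReal := by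
  have h := congrArg Complex.ofRealHom.mapMatrix hS
  simp only [RingHom.mapMatrix_apply, Matrix.map_mul, Matrix.transpose_map] at h
  rw [conjTranspose_map_ofReal]
  exact h

theorem CM_plus_iD_invertible_general {n : ℕ}
    (S : Matrix (Fin n ⊕ Fin n) (Fin n ⊕ Fin n) ℝ) (hS : IsSymplectic S)
    (A B C D : Matrix (Fin n) (Fin n) ℝ) (hblocks : S = Matrix.fromBlocks A B C D)
    (X Y : Matrix (Fin n) (Fin n) ℝ) (hYsymm : Y.IsSymm)
    (hX : X.PosDef) :
    IsUnit (C.map Complex.ofReal *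
        (X.map Complex.ofReal + Complex.I • Y.map Complex.ofReal) +
      Complex.I • D.map Complex.ofReal) := by
  have hM : (X.map Complex.ofReal + Complex.I • Y.map Complex.ofReal)ᴴ +
      (X.map Complex.ofReal + Complex.I • Y.map Complex.ofReal) = (2 : ℂ) • X.map Complex.ofReal :=
    (isHermitian_iff_isSymm.1 hX.isHermitian).isHermitian_map_ofReal
      |>.conjTranspose_add_self_add_I_smul hYsymm.isHermitian_map_ofReal
  generalize X.map Complex.ofReal + Complex.I • Y.map Complex.ofReal = M at hM ⊢
  rw [isUnit_iff_isUnit_det, isUnit_iff_ne_zero]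
  intro hdet
  obtain ⟨v, hv, hker⟩ := exists_mulVec_eq_zero_iff.2 hdet
  have hSξ : S.map Complex.ofReal *ᵥ Sum.elim (M *ᵥ v) (Complex.I • v) =
      Sum.elim (A.map Complex.ofReal *ᵥ (M *ᵥ v) + B.map Complex.ofReal *ᵥ (Complex.I • v)) 0 := by
    rw [hblocks, fromBlocks_map, fromBlocks_mulVec, Sum.elim_comp_inl, Sum.elim_comp_inr, ← hker,
      add_mulVec, ← mulVec_mulVec, smul_mulVec, mulVec_smul, mulVec_smul]
  have hform := star_mulVec_dotProduct_mulVec_of_conjTranspose_mul_mul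
    hS.conjTranspose_map_ofReal_mul_mul (Sum.elim (M *ᵥ v) (Complex.I • v))
  rw [hSξ, star_sumElim_dotProduct_stdJ_mulVec_sumElim,
    star_sumElim_dotProduct_stdJ_mulVec_sumElim, star_mulVec_dotProduct_I_smul_sub, hM] at hform
  simp only [dotProduct_zero, star_zero, zero_dotProduct, sub_zero, smul_mulVec, dotProduct_smul,
    smul_eq_mul, zero_eq_mul, mul_eq_zero, Complex.I_ne_zero, two_ne_zero, false_or] at hform
  simpa [hform] using hX.re_star_dotProduct_map_ofReal_mulVec_pos hv

/-- For a symplectic matrix `S = ((A,B),(C,D))` and `M = X + iY` with `X, Y` real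
symmetric and `X` positive definite, the complex matrix `CM + iD` is invertible. -/
theorem CM_plus_iD_invertible {n : ℕ} (hn : 1 ≤ n)
    (S : Matrix (Fin n ⊕ Fin n) (Fin n ⊕ Fin n) ℝ) (hS : IsSymplectic S)
    (A B C D : Matrix (Fin n) (Fin n) ℝ) (hblocks : S = Matrix.fromBlocks A B C D)
    (X Y : Matrix (Fin n) (Fin n) ℝ) (hXsymm : X.IsSymm) (hYsymm : Y.IsSymm)
    (hX : X.PosDef) :
    IsUnit (C.map Complex.ofReal *
        (X.map Complex.ofReal + Complex.I • Y.map Complex.ofReal) +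
      Complex.I • D.map Complex.ofReal) :=
  CM_plus_iD_invertible_general S hS A B C D hblocks X Y hYsymm hX
end
end

section
/- Let ħ > 0, let X and Y be real symmetric n×n matrices with X positive definite, set M = X + iY, and let z₀ = (x₀,p₀) ∈ ℝ²ⁿ. Define the shifted squeezed coherent state Φ_{M,z₀} = T̂(z₀)Φ_M, where Φ_M(x) = (πħ)^{−n/4}(det X)^{1/4} e^{−⟨(X+iY)x,x⟩/(2ħ)} and (T̂(z₀)ψ)(x) = e^{(i/ħ)(p₀·x − p₀·x₀/2)} ψ(x − x₀). Then for every z ∈ ℝ²ⁿ, WΦ_{M,z₀}(z) = (πħ)^{−n} e^{−⟨G(z−z₀), z−z₀⟩/ħ}, where G = ((X + Y X⁻¹ Y, Y X⁻¹),(X⁻¹ Y, X⁻¹)). -/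
/-! Writing `u = x - x₀`, the product `Φ(x + y/2) · conj Φ(x - y/2)` of the two Gaussians is,
by the parallelogram law for `X` and polarization for `Y`, the constant
`(πħ)^{-n/2} (det X)^{1/2} e^{-⟨Xu,u⟩/ħ}` times a Gaussian in `y` with quadratic part
`⟨Xy,y⟩/(4ħ)` and linear part `-(i/ħ)⟨p - p₀ + Yu, y⟩`; the phase of `T̂(z₀)` supplies `p₀`.
The Gaussian integral `∫ e^{-⟨Ay,y⟩ + c⟨q,y⟩} dy = √(πⁿ/det A) e^{c²⟨A⁻¹q,q⟩/4}`, obtained by the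
substitution `y = A^{-1/2} w`, then yields `e^{-⟨X⁻¹(p - p₀ + Yu), p - p₀ + Yu⟩/ħ}`, and `G` is
precisely the matrix of the quadratic form `(u, v) ↦ ⟨Xu,u⟩ + ⟨X⁻¹(v + Yu), v + Yu⟩`. -/

open Matrix MeasureTheory

noncomputable section

/-- The Wigner transform of `ψ : ℝⁿ → ℂ`:
`Wψ(x,p) = (2πħ)⁻ⁿ ∫ e^{-i p·y/ħ} ψ(x + y/2) conj(ψ(x - y/2)) dy`. -/
def wigner (n : ℕ) (hb : ℝ) (ψ : (Fin n → ℝ) → ℂ) (x p : Fin n → ℝ) : ℂ :=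
  (((2 * Real.pi * hb) ^ n : ℝ)⁻¹ : ℂ) *
    ∫ y : Fin n → ℝ,
      Complex.exp (-(Complex.I * ((p ⬝ᵥ y : ℝ) : ℂ)) / (hb : ℂ)) *
        ψ (x + y / 2) * (starRingEnd ℂ) (ψ (x - y / 2))

/-- The squeezed coherent state
`Φ_M(x) = (πħ)^{-n/4} (det X)^{1/4} e^{-⟨(X+iY)x, x⟩/(2ħ)}` with `M = X + iY`. -/
def squeezed (n : ℕ) (hb : ℝ) (X Y : Matrix (Fin n) (Fin n) ℝ) (x : Fin n → ℝ) : ℂ :=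
  (((Real.pi * hb) ^ (-(n : ℝ) / 4) * X.det ^ ((1 : ℝ) / 4) : ℝ) : ℂ) *
    Complex.exp (-(((X.mulVec x ⬝ᵥ x : ℝ) : ℂ) +
      Complex.I * ((Y.mulVec x ⬝ᵥ x : ℝ) : ℂ)) / (2 * (hb : ℂ)))

/-- The Heisenberg–Weyl operator:
`(T̂(z₀)ψ)(x) = e^{(i/ħ)(p₀·x - p₀·x₀/2)} ψ(x - x₀)`. -/
def heisenbergWeyl (n : ℕ) (hb : ℝ) (x₀ p₀ : Fin n → ℝ) (ψ : (Fin n → ℝ) → ℂ)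
    (x : Fin n → ℝ) : ℂ :=
  Complex.exp ((Complex.I / (hb : ℂ)) *
      (((p₀ ⬝ᵥ x : ℝ) : ℂ) - ((p₀ ⬝ᵥ x₀ : ℝ) : ℂ) / 2)) * ψ (x - x₀)

open Complex Real

namespace Matrix

variable {ι : Type*} [Fintype ι]

theorem IsSymm.mulVec_dotProduct {R : Type*} [CommSemiring R] {M : Matrix ι ι R}
    (hM : M.IsSymm) (a b : ι → R) : M *ᵥ a ⬝ᵥ b = a ⬝ᵥ M *ᵥ b := by
  rw [dotProduct_comm, ← dotProduct_transpose_mulVec, hM.eq]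

theorem parallelogram_law_mulVec_dotProduct {R : Type*} [CommRing R] (M : Matrix ι ι R)
    (u v : ι → R) :
    M *ᵥ (u + v) ⬝ᵥ (u + v) + M *ᵥ (u - v) ⬝ᵥ (u - v) =
      2 * (M *ᵥ u ⬝ᵥ u) + 2 * (M *ᵥ v ⬝ᵥ v) := by
  simp only [mulVec_add, mulVec_sub, add_dotProduct, sub_dotProduct, dotProduct_add,
    dotProduct_sub]
  ring

theorem IsSymm.polarization_mulVec_dotProduct {R : Type*} [CommRing R] {M : Matrix ι ι R}
    (hM : M.IsSymm) (u v : ι → R) :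
    M *ᵥ (u + v) ⬝ᵥ (u + v) - M *ᵥ (u - v) ⬝ᵥ (u - v) = 4 * (M *ᵥ u ⬝ᵥ v) := by
  simp only [mulVec_add, mulVec_sub, add_dotProduct, sub_dotProduct, dotProduct_add,
    dotProduct_sub, hM.mulVec_dotProduct v u, dotProduct_comm v (M *ᵥ u)]
  ring

-- `G = Sᵀ (X ⊕ X⁻¹) S` with `S = [[1, 0], [Y, 1]]`.
theorem fromBlocks_mulVec_sumElim_dotProduct_sumElim {R : Type*} [CommRing R] [DecidableEq ι]
    {X Y : Matrix ι ι R} (hX : X.IsSymm) (hY : Y.IsSymm) (u v : ι → R) :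
    fromBlocks (X + Y * X⁻¹ * Y) (Y * X⁻¹) (X⁻¹ * Y) X⁻¹ *ᵥ Sum.elim u v ⬝ᵥ Sum.elim u v =
      X *ᵥ u ⬝ᵥ u + X⁻¹ *ᵥ (v + Y *ᵥ u) ⬝ᵥ (v + Y *ᵥ u) := by
  simp only [fromBlocks_mulVec, sumElim_dotProduct_sumElim, Sum.elim_comp_inl,
    Sum.elim_comp_inr, add_mulVec, ← mulVec_mulVec, mulVec_add, add_dotProduct, dotProduct_add,
    hY.mulVec_dotProduct _ u, hX.inv.mulVec_dotProduct _ (Y *ᵥ u)]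
  ring

theorem integral_comp_mulVec [DecidableEq ι] {E : Type*} [NormedAddCommGroup E]
    [NormedSpace ℝ E] (f : (ι → ℝ) → E) {S : Matrix ι ι ℝ} (hS : S.det ≠ 0) :
    ∫ y, f y = |S.det| • ∫ w, f (S *ᵥ w) := by
  have hemb : MeasurableEmbedding (toLin' S) :=
    ((toLin' S).isClosedEmbedding_of_injective
      (LinearMap.ker_eq_bot.mpr (mulVec_injective_iff_isUnit.mpr
        ((isUnit_iff_isUnit_det S).mpr hS.isUnit)))).measurableEmbedding
  have hmap := hemb.integral_map (μ := volume) f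
  rw [Real.map_matrix_volume_pi_eq_smul_volume_pi hS, integral_smul_measure,
    ENNReal.toReal_ofReal (by positivity)] at hmap
  simp only [toLin'_apply] at hmap
  rw [← hmap, smul_smul, abs_inv, mul_inv_cancel₀ (abs_ne_zero.mpr hS), one_smul]

theorem integral_cexp_neg_dotProduct_self_add (c : ℂ) (v : ι → ℝ) :
    ∫ w : ι → ℝ, cexp (-((w ⬝ᵥ w : ℝ) : ℂ) + c * ((v ⬝ᵥ w : ℝ) : ℂ)) =
      (√(π ^ Fintype.card ι) : ℂ) * cexp (c ^ 2 * ((v ⬝ᵥ v : ℝ) : ℂ) / 4) := by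
  have h := GaussianFourier.integral_cexp_neg_mul_sum_add (b := 1) one_pos (fun i ↦ c * v i)
  have hπ : (π : ℂ) ^ (Fintype.card ι / 2 : ℂ) = (√(π ^ Fintype.card ι) : ℂ) := by
    rw [Real.sqrt_eq_rpow, ← Real.rpow_natCast, ← Real.rpow_mul pi_pos.le, ofReal_cpow pi_pos.le]
    push_cast; ring_nf
  simpa only [dotProduct, ofReal_sum, ofReal_mul, ofReal_pow, Finset.mul_sum, ← sq, mul_pow,
    ← mul_assoc, mul_one, neg_one_mul, Finset.sum_neg_distrib, div_one, hπ] using h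

open scoped MatrixOrder in
theorem PosDef.exists_isSymm_mul_self_eq_inv [DecidableEq ι] {A : Matrix ι ι ℝ} (hA : A.PosDef) :
    ∃ S : Matrix ι ι ℝ, S.IsSymm ∧ S * S = A⁻¹ :=
  ⟨CFC.sqrt A⁻¹, isHermitian_iff_isSymm.mp (CFC.sqrt_nonneg A⁻¹).posSemidef.isHermitian,
    CFC.sqrt_mul_sqrt_self _ hA.inv.posSemidef.nonneg⟩

theorem PosDef.integral_cexp_neg_mulVec_dotProduct_add [DecidableEq ι] {A : Matrix ι ι ℝ}
    (hA : A.PosDef) (c : ℂ) (q : ι → ℝ) :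
    ∫ y : ι → ℝ, cexp (-((A *ᵥ y ⬝ᵥ y : ℝ) : ℂ) + c * ((q ⬝ᵥ y : ℝ) : ℂ)) =
      (√(π ^ Fintype.card ι / A.det) : ℂ) * cexp (c ^ 2 * ((A⁻¹ *ᵥ q ⬝ᵥ q : ℝ) : ℂ) / 4) := by
  obtain ⟨S, hS, hSS⟩ := hA.exists_isSymm_mul_self_eq_inv
  have hdet_sq : S.det * S.det = A.det⁻¹ := by
    rw [← det_mul, hSS, det_nonsing_inv, Ring.inverse_eq_inv']
  have hdet : S.det ≠ 0 := left_ne_zero_of_mul (hdet_sq ▸ inv_ne_zero hA.det_pos.ne')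
  have hSAS : S * A * S = 1 := by
    rw [← nonsing_inv_nonsing_inv A hA.det_pos.ne'.isUnit, ← hSS, mul_inv_rev,
      ← Matrix.mul_assoc, mul_nonsing_inv _ hdet.isUnit, Matrix.one_mul,
      nonsing_inv_mul _ hdet.isUnit]
  have hquad (w : ι → ℝ) : A *ᵥ (S *ᵥ w) ⬝ᵥ S *ᵥ w = w ⬝ᵥ w := by
    rw [mulVec_mulVec, ← hS.mulVec_dotProduct, mulVec_mulVec, ← Matrix.mul_assoc, hSAS,
      one_mulVec]
  have hlin (w : ι → ℝ) : q ⬝ᵥ S *ᵥ w = S *ᵥ q ⬝ᵥ w := (hS.mulVec_dotProduct q w).symm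
  have hnorm : S *ᵥ q ⬝ᵥ S *ᵥ q = A⁻¹ *ᵥ q ⬝ᵥ q := by
    rw [hS.mulVec_dotProduct, mulVec_mulVec, hSS, dotProduct_comm]
  rw [integral_comp_mulVec _ hdet]
  simp only [hquad, hlin]
  rw [integral_cexp_neg_dotProduct_self_add, hnorm, real_smul, ← mul_assoc, ← ofReal_mul]
  congr 2
  rw [← Real.sqrt_mul_self_eq_abs, hdet_sq, ← Real.sqrt_mul (inv_pos.mpr hA.det_pos).le, mul_comm,
    div_eq_mul_inv]

end Matrix

section Wigner

variable {n : ℕ} {hb : ℝ} {X Y : Matrix (Fin n) (Fin n) ℝ}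

theorem heisenbergWeyl_squeezed_apply (x₀ p₀ z : Fin n → ℝ) :
    heisenbergWeyl n hb x₀ p₀ (squeezed n hb X Y) z =
      (((π * hb) ^ (-(n : ℝ) / 4) * X.det ^ ((1 : ℝ) / 4) : ℝ) : ℂ) *
        cexp (I / hb * (((p₀ ⬝ᵥ z : ℝ) : ℂ) - ((p₀ ⬝ᵥ x₀ : ℝ) : ℂ) / 2) -
          (((X *ᵥ (z - x₀) ⬝ᵥ (z - x₀) : ℝ) : ℂ) + I * ((Y *ᵥ (z - x₀) ⬝ᵥ (z - x₀) : ℝ) : ℂ)) /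
            (2 * hb)) := by
  rw [heisenbergWeyl, squeezed, sub_eq_add_neg (I / _ * _), ← neg_div, Complex.exp_add]
  ring

theorem wigner_integrand_heisenbergWeyl_squeezed (hY : Y.IsSymm) (x₀ p₀ x p y : Fin n → ℝ) :
    cexp (-(I * ((p ⬝ᵥ y : ℝ) : ℂ)) / hb) *
        heisenbergWeyl n hb x₀ p₀ (squeezed n hb X Y) (x + y / 2) *
        starRingEnd ℂ (heisenbergWeyl n hb x₀ p₀ (squeezed n hb X Y) (x - y / 2)) =
      ((((π * hb) ^ (-(n : ℝ) / 4) * X.det ^ ((1 : ℝ) / 4)) ^ 2 : ℝ) : ℂ) *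
        cexp (-((X *ᵥ (x - x₀) ⬝ᵥ (x - x₀) : ℝ) : ℂ) / hb) *
        cexp (-((((4 * hb)⁻¹ • X) *ᵥ y ⬝ᵥ y : ℝ) : ℂ) +
          -I / hb * (((p - p₀ + Y *ᵥ (x - x₀)) ⬝ᵥ y : ℝ) : ℂ)) := by
  have hexp (a b c : ℂ) (C : ℝ) :
      cexp a * (C * cexp b) * starRingEnd ℂ (C * cexp c) =
        ((C ^ 2 : ℝ) : ℂ) * cexp (a + b + starRingEnd ℂ c) := by
    rw [map_mul, conj_ofReal, ← exp_conj]
    simp only [Complex.exp_add]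
    push_cast
    ring
  rw [heisenbergWeyl_squeezed_apply, heisenbergWeyl_squeezed_apply, hexp, mul_assoc,
    ← Complex.exp_add]
  congr 2
  set u := x - x₀
  set v : Fin n → ℝ := (2⁻¹ : ℝ) • y
  have hv : y / 2 = v := by ext; simp [v, div_eq_inv_mul]
  have hplus : x + v - x₀ = u + v := add_sub_right_comm x v x₀
  have hminus : x - v - x₀ = u - v := sub_right_comm x v x₀
  have hX := parallelogram_law_mulVec_dotProduct X u v
  have hY' := hY.polarization_mulVec_dotProduct u v
  have hXv : X *ᵥ v ⬝ᵥ v = (X *ᵥ y ⬝ᵥ y) / 4 := by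
    simp only [v, mulVec_smul, smul_dotProduct, dotProduct_smul, smul_eq_mul]; ring
  have hYv : Y *ᵥ u ⬝ᵥ v = (Y *ᵥ u ⬝ᵥ y) / 2 := by
    simp only [v, dotProduct_smul, smul_eq_mul]; ring
  have hp : p₀ ⬝ᵥ (x + v) - p₀ ⬝ᵥ (x - v) = p₀ ⬝ᵥ y := by
    simp only [v, dotProduct_add, dotProduct_sub, dotProduct_smul, smul_eq_mul]; ring
  rw [hv, hplus, hminus]
  apply_fun ((↑) : ℝ → ℂ) at hX hY' hXv hYv hp
  simp only [map_add, map_sub, map_mul, map_div₀, conj_I, conj_ofReal, map_ofNat,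
    smul_mulVec, smul_dotProduct, smul_eq_mul, add_dotProduct, sub_dotProduct]
  push_cast at hX hY' hXv hYv hp ⊢
  linear_combination (-1 / (2 * hb) : ℂ) * hX + (-1 / hb : ℂ) * hXv + (-I / (2 * hb)) * hY'
    + (-2 * I / hb) * hYv + (I / hb) * hp

theorem wigner_squeezed_prefactor (hhb : 0 < hb) {d : ℝ} (hd : 0 < d) :
    ((2 * π * hb) ^ n)⁻¹ * ((π * hb) ^ (-(n : ℝ) / 4) * d ^ ((1 : ℝ) / 4)) ^ 2 *
      √(π ^ n / ((4 * hb)⁻¹ ^ n * d)) = ((π * hb) ^ n)⁻¹ := by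
  have hC : (((π * hb) ^ (-(n : ℝ) / 4) * d ^ ((1 : ℝ) / 4)) ^ 2) ^ 2 = d / (π * hb) ^ n := by
    have hn : -(n : ℝ) / 4 * ((2 * 2 : ℕ) : ℝ) = -n := by push_cast; ring
    have h1 : (1 : ℝ) / 4 * ((2 * 2 : ℕ) : ℝ) = 1 := by norm_num
    rw [← pow_mul, mul_pow, ← Real.rpow_mul_natCast (by positivity),
      ← Real.rpow_mul_natCast hd.le, hn, h1, Real.rpow_neg (by positivity), Real.rpow_natCast,
      Real.rpow_one, inv_mul_eq_div]
  rw [← sq_eq_sq₀ (by positivity) (by positivity), mul_pow, mul_pow, hC,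
    Real.sq_sqrt (by positivity)]
  simp only [inv_pow]
  field_simp
  rw [← mul_pow, ← mul_pow, ← pow_mul, mul_comm n 2, pow_mul]
  ring

end Wigner

theorem wigner_shifted_squeezed_general {n : ℕ} (hb : ℝ) (hhb : 0 < hb)
    (X Y : Matrix (Fin n) (Fin n) ℝ) (hY : Y.IsSymm) (hXpos : X.PosDef)
    (x₀ p₀ : Fin n → ℝ) :
    ∀ x p : Fin n → ℝ,
      wigner n hb (heisenbergWeyl n hb x₀ p₀ (squeezed n hb X Y)) x p =
        (((Real.pi * hb) ^ n : ℝ)⁻¹ : ℂ) *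
          Complex.exp (-((((Matrix.fromBlocks (X + Y * X⁻¹ * Y) (Y * X⁻¹) (X⁻¹ * Y) X⁻¹).mulVec
            (Sum.elim (x - x₀) (p - p₀)) ⬝ᵥ Sum.elim (x - x₀) (p - p₀) : ℝ)) : ℂ) / (hb : ℂ)) := by
  intro x p
  have hX : X.IsSymm := isHermitian_iff_isSymm.mp hXpos.isHermitian
  have hA : ((4 * hb)⁻¹ • X).PosDef := hXpos.smul (by positivity)
  have hA_inv : ((4 * hb)⁻¹ • X)⁻¹ = (4 * hb) • X⁻¹ := by
    refine inv_eq_left_inv ?_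
    rw [smul_mul_smul_comm, mul_inv_cancel₀ (by positivity), one_smul,
      nonsing_inv_mul _ hXpos.det_pos.ne'.isUnit]
  simp only [wigner, wigner_integrand_heisenbergWeyl_squeezed hY]
  rw [integral_const_mul, hA.integral_cexp_neg_mulVec_dotProduct_add, hA_inv, det_smul,
    Fintype.card_fin, fromBlocks_mulVec_sumElim_dotProduct_sumElim hX hY,
    mul_mul_mul_comm, ← Complex.exp_add, ← mul_assoc, ← mul_assoc]
  congr 1
  · rw [← ofReal_inv ((π * hb) ^ n), ← wigner_squeezed_prefactor hhb hXpos.det_pos]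
    push_cast
    ring
  · congr 1
    simp only [smul_mulVec, smul_dotProduct, smul_eq_mul]
    push_cast
    field_simp
    rw [I_sq]
    ring

/-- The Wigner transform of the shifted squeezed coherent state `Φ_{M,z₀} = T̂(z₀)Φ_M` is
`(πħ)⁻ⁿ e^{-⟨G(z-z₀), z-z₀⟩/ħ}` with `G = ((X + Y X⁻¹ Y, Y X⁻¹), (X⁻¹ Y, X⁻¹))`. -/
theorem wigner_shifted_squeezed {n : ℕ} (hn : 1 ≤ n) (hb : ℝ) (hhb : 0 < hb)
    (X Y : Matrix (Fin n) (Fin n) ℝ) (hX : X.IsSymm) (hY : Y.IsSymm) (hXpos : X.PosDef)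
    (x₀ p₀ : Fin n → ℝ) :
    ∀ x p : Fin n → ℝ,
      wigner n hb (heisenbergWeyl n hb x₀ p₀ (squeezed n hb X Y)) x p =
        (((Real.pi * hb) ^ n : ℝ)⁻¹ : ℂ) *
          Complex.exp (-((((Matrix.fromBlocks (X + Y * X⁻¹ * Y) (Y * X⁻¹) (X⁻¹ * Y) X⁻¹).mulVec
            (Sum.elim (x - x₀) (p - p₀)) ⬝ᵥ Sum.elim (x - x₀) (p - p₀) : ℝ)) : ℂ) / (hb : ℂ)) :=
  wigner_shifted_squeezed_general hb hhb X Y hY hXpos x₀ p₀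
end
end
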